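/- arXiv:2502.11038 — 2 statements merged into one kernel-verified Lean document; each statement's English description precedes it below -/
import Mathlib

section
/- For 0 < σ̲ ≤ σ̄ and α ∈ (0, 1/2), evaluating p1 at the classical critical value c = σ̄·Φ^{-1}(1-α) gives p1(σ̄·Φ^{-1}(1-α); σ̲, σ̄) = 2ασ̄/(σ̄+σ̲), which is greater than or equal to α, with strict inequality whenever σ̲ < σ̄. -/
open MeasureTheory Real

/-- The standard normal probability density function. -/
noncomputable def stdNormalPDF (x : ℝ) : ℝ :=
  (Real.sqrt (2 * Real.pi))⁻¹ * Real.exp (-x ^ 2 / 2)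

/-- The asymptotic maximum false rejection probability function
`p1(c; σ̲, σ̄) = (2/(σ̄+σ̲)) ∫_c^∞ [φ(z/σ̄)1(z≥0) + φ(z/σ̲)1(z<0)] dz`. -/
noncomputable def p1 (σl σu c : ℝ) : ℝ :=
  (2 / (σu + σl)) *
    ∫ z in Set.Ioi c, (if 0 ≤ z then stdNormalPDF (z / σu) else stdNormalPDF (z / σl))

/-- The standard normal cumulative distribution function Φ. -/
noncomputable def Phi (x : ℝ) : ℝ := ∫ z in Set.Iic x, stdNormalPDF z

/-- The inverse Φ⁻¹ of the standard normal distribution function. -/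
noncomputable def PhiInv : ℝ → ℝ := Function.invFun Phi

lemma stdNormalPDF_eq : stdNormalPDF = ProbabilityTheory.gaussianPDFReal 0 1 := by
  ext x
  simp [stdNormalPDF, ProbabilityTheory.gaussianPDFReal, one_div, neg_div]

lemma stdNormalPDF_pos (x : ℝ) : 0 < stdNormalPDF x := by
  rw [stdNormalPDF_eq]
  exact ProbabilityTheory.gaussianPDFReal_pos 0 1 x one_ne_zero

lemma integrable_stdNormalPDF : Integrable stdNormalPDF := by
  rw [stdNormalPDF_eq]; exact ProbabilityTheory.integrable_gaussianPDFReal 0 1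

lemma integral_stdNormalPDF : ∫ x, stdNormalPDF x = 1 := by
  rw [stdNormalPDF_eq]; exact ProbabilityTheory.integral_gaussianPDFReal_eq_one 0 one_ne_zero

lemma continuous_stdNormalPDF : Continuous stdNormalPDF := by
  unfold stdNormalPDF; fun_prop

lemma Phi_sub_Phi (a b : ℝ) : Phi b - Phi a = ∫ x in a..b, stdNormalPDF x :=
  intervalIntegral.integral_Iic_sub_Iic integrable_stdNormalPDF.integrableOn
    integrable_stdNormalPDF.integrableOn

lemma Phi_strictMono : StrictMono Phi := by
  intro a b hab
  have h := Phi_sub_Phi a b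
  have hpos : 0 < ∫ x in a..b, stdNormalPDF x :=
    intervalIntegral.intervalIntegral_pos_of_pos integrable_stdNormalPDF.intervalIntegrable
      stdNormalPDF_pos hab
  linarith

lemma Phi_continuous : Continuous Phi := by
  have : Phi = fun b => Phi 0 + ∫ x in (0:ℝ)..b, stdNormalPDF x := by
    ext b
    have := Phi_sub_Phi 0 b
    linarith
  rw [this]
  exact continuous_const.add
    (intervalIntegral.continuous_primitive (fun a b => integrable_stdNormalPDF.intervalIntegrable) 0)

lemma Phi_zero : Phi 0 = 1 / 2 := by
  have hsymm : (∫ x in Set.Iic (0:ℝ), stdNormalPDF x) = ∫ x in Set.Ioi (0:ℝ), stdNormalPDF x := by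
    rw [show (Set.Ioi (0:ℝ)) = Set.Ioi (-(0:ℝ)) by norm_num,
      ← integral_comp_neg_Iic 0 stdNormalPDF]
    apply setIntegral_congr_fun measurableSet_Iic
    intro x _
    simp [stdNormalPDF, neg_pow]
  have htot : (∫ x in Set.Iic (0:ℝ), stdNormalPDF x) + (∫ x in Set.Ioi (0:ℝ), stdNormalPDF x) = 1 := by
    rw [intervalIntegral.integral_Iic_add_Ioi integrable_stdNormalPDF.integrableOn
      integrable_stdNormalPDF.integrableOn, integral_stdNormalPDF]
  unfold Phi
  linarith [hsymm, htot]

lemma Phi_tendsto_atTop : Filter.Tendsto Phi Filter.atTop (nhds 1) := by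
  have h : Filter.Tendsto (fun b => Phi 0 + ∫ x in (0:ℝ)..b, stdNormalPDF x)
      Filter.atTop (nhds (Phi 0 + ∫ x in Set.Ioi (0:ℝ), stdNormalPDF x)) := by
    exact Filter.Tendsto.const_add _
      (intervalIntegral_tendsto_integral_Ioi 0 integrable_stdNormalPDF.integrableOn
        Filter.tendsto_id)
  have heq : (fun b => Phi 0 + ∫ x in (0:ℝ)..b, stdNormalPDF x) = Phi := by
    ext b; have := Phi_sub_Phi 0 b; linarith
  have hval : Phi 0 + (∫ x in Set.Ioi (0:ℝ), stdNormalPDF x) = 1 := by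
    have htot := intervalIntegral.integral_Iic_add_Ioi (μ := volume) (b := (0:ℝ))
      integrable_stdNormalPDF.integrableOn integrable_stdNormalPDF.integrableOn
    rw [integral_stdNormalPDF] at htot
    unfold Phi
    linarith
  rw [heq, hval] at h
  exact h

lemma Phi_tendsto_atBot : Filter.Tendsto Phi Filter.atBot (nhds 0) := by
  have h : Filter.Tendsto (fun a => Phi 0 - ∫ x in a..(0:ℝ), stdNormalPDF x)
      Filter.atBot (nhds (Phi 0 - ∫ x in Set.Iic (0:ℝ), stdNormalPDF x)) := by
    exact Filter.Tendsto.const_sub _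
      (intervalIntegral_tendsto_integral_Iic 0 integrable_stdNormalPDF.integrableOn
        Filter.tendsto_id)
  have heq : (fun a => Phi 0 - ∫ x in a..(0:ℝ), stdNormalPDF x) = Phi := by
    ext a; have := Phi_sub_Phi a 0; linarith
  have hval : Phi 0 - (∫ x in Set.Iic (0:ℝ), stdNormalPDF x) = 0 := by
    unfold Phi; ring
  rw [heq, hval] at h
  exact h

lemma Phi_surj_Ioo {y : ℝ} (hy0 : 0 < y) (hy1 : y < 1) : ∃ x, Phi x = y := by
  obtain ⟨a, ha⟩ : ∃ a, Phi a < y := by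
    have := Phi_tendsto_atBot.eventually_lt_const hy0
    exact this.exists
  obtain ⟨b, hb⟩ : ∃ b, y < Phi b := by
    have := Phi_tendsto_atTop.eventually_const_lt hy1
    exact this.exists
  have hab : a ≤ b := le_of_lt (Phi_strictMono.lt_iff_lt.mp (lt_trans ha hb))
  obtain ⟨x, _, hx⟩ := intermediate_value_Icc hab Phi_continuous.continuousOn
    ⟨le_of_lt ha, le_of_lt hb⟩
  exact ⟨x, hx⟩

/-- evaluating `p1` at the classical critical value gives
`2ασ̄/(σ̄+σ̲) ≥ α`, with strict inequality when `σ̲ < σ̄`. -/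
theorem p1_at_classical_critical (σl σu α : ℝ) (hl : 0 < σl) (hlu : σl ≤ σu)
    (hα : 0 < α) (hα' : α < 1 / 2) :
    p1 σl σu (σu * PhiInv (1 - α)) = 2 * α * σu / (σu + σl) ∧
    α ≤ 2 * α * σu / (σu + σl) ∧
    (σl < σu → α < 2 * α * σu / (σu + σl)) := by
  have hu : 0 < σu := lt_of_lt_of_le hl hlu
  have hsum : 0 < σu + σl := by linarith
  have hrange : ∃ x, Phi x = 1 - α := Phi_surj_Ioo (by linarith) (by linarith)
  have hPhiInv : Phi (PhiInv (1 - α)) = 1 - α := Function.invFun_eq hrange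
  set t := PhiInv (1 - α) with ht
  have htpos : 0 < t := by
    by_contra h
    push_neg at h
    have : Phi t ≤ Phi 0 := Phi_strictMono.monotone h
    rw [hPhiInv, Phi_zero] at this
    linarith
  have hcpos : 0 < σu * t := mul_pos hu htpos
  -- the integral over Ioi (σu * t)
  have hIoi : (∫ x in Set.Ioi t, stdNormalPDF x) = α := by
    have htot := intervalIntegral.integral_Iic_add_Ioi (μ := volume) (b := t)
      integrable_stdNormalPDF.integrableOn integrable_stdNormalPDF.integrableOn
    rw [integral_stdNormalPDF] at htot
    have : Phi t = 1 - α := hPhiInv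
    unfold Phi at this
    linarith
  have hstep1 : (∫ z in Set.Ioi (σu * t),
      (if 0 ≤ z then stdNormalPDF (z / σu) else stdNormalPDF (z / σl)))
      = ∫ z in Set.Ioi (σu * t), stdNormalPDF (σu⁻¹ * z) := by
    apply setIntegral_congr_fun measurableSet_Ioi
    intro z hz
    have hz0 : 0 ≤ z := le_of_lt (lt_of_lt_of_le hcpos (le_of_lt hz))
    simp only [if_pos hz0, div_eq_inv_mul]
  have hstep2 : (∫ z in Set.Ioi (σu * t), stdNormalPDF (σu⁻¹ * z)) = σu * α := by
    rw [integral_comp_mul_left_Ioi stdNormalPDF (σu * t) (inv_pos.mpr hu)]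
    rw [show σu⁻¹ * (σu * t) = t by field_simp]
    rw [hIoi, smul_eq_mul, inv_inv]
  have hmain : p1 σl σu (σu * t) = 2 * α * σu / (σu + σl) := by
    unfold p1
    rw [hstep1, hstep2]
    field_simp
  refine ⟨hmain, ?_, ?_⟩
  · rw [le_div_iff₀ hsum]; nlinarith
  · intro hlt
    rw [lt_div_iff₀ hsum]; nlinarith
end

section
/- The function u(t,x) = f((x-c)/√t), with f as defined above, satisfies the G-heat equation u_t = (1/2)·(σ̄²·(u_xx)⁺ - σ̲²·(u_xx)⁻) for all t > 0 and x ≠ c. -/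
open MeasureTheory Real

/-- The solution profile `f(y; σ̲, σ̄) = (2/(σ̄+σ̲)) ∫_{-y}^∞ [φ(z/σ̄)1(z≥0)+φ(z/σ̲)1(z<0)] dz`. -/
noncomputable def fG (σl σu y : ℝ) : ℝ :=
  (2 / (σu + σl)) *
    ∫ z in Set.Ioi (-y), (if 0 ≤ z then stdNormalPDF (z / σu) else stdNormalPDF (z / σl))

/-- The claimed second derivative
`f''(y) = (-2y/(σ̄+σ̲))·[(1/σ̄²)φ(y/σ̄)1(y≤0) + (1/σ̲²)φ(y/σ̲)1(y>0)]`. -/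
noncomputable def fGsecond (σl σu y : ℝ) : ℝ :=
  (-2 * y / (σu + σl)) *
    ((if y ≤ 0 then (1 / σu ^ 2) * stdNormalPDF (y / σu) else 0) +
     (if 0 < y then (1 / σl ^ 2) * stdNormalPDF (y / σl) else 0))

/- ### Auxiliary development -/

noncomputable def gfun (σl σu z : ℝ) : ℝ :=
  if 0 ≤ z then stdNormalPDF (z / σu) else stdNormalPDF (z / σl)

lemma gfun_pos (σl σu z : ℝ) : 0 < gfun σl σu z := by
  unfold gfun; split <;> exact stdNormalPDF_pos _

lemma continuous_gfun (σl σu : ℝ) : Continuous (gfun σl σu) := by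
  unfold gfun
  apply Continuous.if_le
  · exact continuous_stdNormalPDF.comp (continuous_id.div_const σu)
  · exact continuous_stdNormalPDF.comp (continuous_id.div_const σl)
  · exact continuous_const
  · exact continuous_id
  · intro x hx
    simp [← hx]

lemma integrable_pdf_div {σ : ℝ} (hσ : 0 < σ) :
    Integrable (fun z => stdNormalPDF (z / σ)) := by
  have h : Integrable (fun z : ℝ => (Real.sqrt (2 * Real.pi))⁻¹ *
      Real.exp (-(1 / (2 * σ ^ 2)) * z ^ 2)) :=
    (integrable_exp_neg_mul_sq (by positivity)).const_mul _
  have heq : (fun z : ℝ => stdNormalPDF (z / σ)) =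
      fun z : ℝ => (Real.sqrt (2 * Real.pi))⁻¹ * Real.exp (-(1 / (2 * σ ^ 2)) * z ^ 2) := by
    funext z
    unfold stdNormalPDF
    have h2 : -(z / σ) ^ 2 / 2 = -(1 / (2 * σ ^ 2)) * z ^ 2 := by
      rw [div_pow]
      field_simp
    rw [h2]
  rw [heq]; exact h

lemma integrable_gfun {σl σu : ℝ} (hl : 0 < σl) (hlu : σl ≤ σu) :
    Integrable (gfun σl σu) := by
  have hu : 0 < σu := lt_of_lt_of_le hl hlu
  refine ((integrable_pdf_div hu).add (integrable_pdf_div hl)).mono'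
    (continuous_gfun σl σu).aestronglyMeasurable ?_
  filter_upwards with z
  rw [Real.norm_eq_abs, abs_of_nonneg (gfun_pos σl σu z).le]
  unfold gfun
  split
  · exact le_add_of_nonneg_right (stdNormalPDF_pos _).le
  · exact le_add_of_nonneg_left (stdNormalPDF_pos _).le

lemma Ioi_split {g : ℝ → ℝ} (hg : Integrable g) (a : ℝ) :
    ∫ z in Set.Ioi a, g z = (∫ z in a..0, g z) + ∫ z in Set.Ioi (0 : ℝ), g z := by
  rcases le_or_gt a 0 with h | h
  · rw [intervalIntegral.integral_of_le h, ← Set.Ioc_union_Ioi_eq_Ioi h,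
      setIntegral_union (Set.Ioc_disjoint_Ioi le_rfl) measurableSet_Ioi
        hg.integrableOn hg.integrableOn]
  · rw [intervalIntegral.integral_of_ge h.le]
    have : ∫ z in Set.Ioi (0 : ℝ), g z =
        (∫ z in Set.Ioc 0 a, g z) + ∫ z in Set.Ioi a, g z := by
      rw [← setIntegral_union (Set.Ioc_disjoint_Ioi le_rfl) measurableSet_Ioi
        hg.integrableOn hg.integrableOn, Set.Ioc_union_Ioi_eq_Ioi h.le]
    rw [this]; ring

lemma hasDerivAt_F {σl σu : ℝ} (hl : 0 < σl) (hlu : σl ≤ σu) (a : ℝ) :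
    HasDerivAt (fun a => ∫ z in Set.Ioi a, gfun σl σu z) (-(gfun σl σu a)) a := by
  have hg := integrable_gfun hl hlu
  have h1 : HasDerivAt (fun v => (∫ z in v..0, gfun σl σu z) +
      ∫ z in Set.Ioi (0 : ℝ), gfun σl σu z) (-(gfun σl σu a)) a := by
    refine HasDerivAt.add_const _ ?_
    exact intervalIntegral.integral_hasDerivAt_left (hg.intervalIntegrable)
      ((continuous_gfun σl σu).stronglyMeasurable.stronglyMeasurableAtFilter)
      (continuous_gfun σl σu).continuousAt
  have heq : (fun a => ∫ z in Set.Ioi a, gfun σl σu z) = fun v =>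
      (∫ z in v..0, gfun σl σu z) + ∫ z in Set.Ioi (0 : ℝ), gfun σl σu z :=
    funext fun v => Ioi_split hg v
  rw [heq]; exact h1

lemma hasDerivAt_fG {σl σu : ℝ} (hl : 0 < σl) (hlu : σl ≤ σu) (y : ℝ) :
    HasDerivAt (fun y => fG σl σu y) ((2 / (σu + σl)) * gfun σl σu (-y)) y := by
  have h := ((hasDerivAt_F hl hlu (-y)).comp y (hasDerivAt_neg y)).const_mul (2 / (σu + σl))
  have heq : (fun y => fG σl σu y) = fun y => (2 / (σu + σl)) *
      ((fun a => ∫ z in Set.Ioi a, gfun σl σu z) ∘ Neg.neg) y := by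
    funext y; rfl
  rw [heq]
  exact h.congr_deriv (by ring)

lemma hasDerivAt_stdNormalPDF (x : ℝ) :
    HasDerivAt stdNormalPDF (-x * stdNormalPDF x) x := by
  have h1 : HasDerivAt (fun x : ℝ => -x ^ 2 / 2) (-x) x := by
    have := ((hasDerivAt_pow 2 x).neg).div_const 2
    exact this.congr_deriv (by simp; ring)
  have h2 := (h1.exp).const_mul (Real.sqrt (2 * Real.pi))⁻¹
  unfold stdNormalPDF
  exact h2.congr_deriv (by ring)

/-- `u(t,x) = f((x-c)/√t)` satisfies the G-heat equation
`u_t = (1/2)(σ̄²(u_xx)⁺ - σ̲²(u_xx)⁻)` for `t > 0`, `x ≠ c`. -/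
theorem u_satisfies_G_heat (σl σu c : ℝ) (hl : 0 < σl) (hlu : σl ≤ σu)
    (u : ℝ → ℝ → ℝ) (hu : ∀ t x, u t x = fG σl σu ((x - c) / Real.sqrt t)) :
    ∀ t > (0 : ℝ), ∀ x, x ≠ c →
      deriv (fun s => u s x) t =
        (1 / 2) * (σu ^ 2 * max (deriv (fun y => deriv (fun w => u t w) y) x) 0
                 - σl ^ 2 * max (-(deriv (fun y => deriv (fun w => u t w) y) x)) 0) := by
  intro t ht x hx
  have hu0 : 0 < σu := lt_of_lt_of_le hl hlu
  have hsum : 0 < σu + σl := by linarith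
  have hst : 0 < Real.sqrt t := Real.sqrt_pos.mpr ht
  have hst2 : Real.sqrt t ^ 2 = t := Real.sq_sqrt ht.le
  have h3 : Real.sqrt t ^ 3 = t * Real.sqrt t := by rw [pow_succ, hst2]
  set K : ℝ := 2 / (σu + σl) with hK
  have hKpos : 0 < K := by positivity
  set y : ℝ := (x - c) / Real.sqrt t with hy
  -- time derivative
  have hinner_t : HasDerivAt (fun s => (x - c) / Real.sqrt s)
      ((x - c) * (-(1 / (2 * Real.sqrt t)) / Real.sqrt t ^ 2)) t := by
    have hsq : HasDerivAt Real.sqrt (1 / (2 * Real.sqrt t)) t := Real.hasDerivAt_sqrt ht.ne'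
    have hinv := hsq.inv hst.ne'
    simpa [div_eq_mul_inv, mul_comm] using hinv.const_mul (x - c)
  have hut : deriv (fun s => u s x) t =
      K * gfun σl σu (-y) * ((x - c) * (-(1 / (2 * Real.sqrt t)) / Real.sqrt t ^ 2)) := by
    have heq : (fun s => u s x) = fun s => fG σl σu ((x - c) / Real.sqrt s) :=
      funext fun s => hu s x
    rw [heq]
    exact (((hasDerivAt_fG hl hlu y).comp t hinner_t)).deriv
  -- first spatial derivative, as a function
  have hderiv1 : ∀ w, deriv (fun w' => u t w') w =
      K * gfun σl σu (-((w - c) / Real.sqrt t)) * (Real.sqrt t)⁻¹ := by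
    intro w
    have hinner : HasDerivAt (fun w' => (w' - c) / Real.sqrt t) ((Real.sqrt t)⁻¹) w := by
      simpa [div_eq_mul_inv] using ((hasDerivAt_id w).sub_const c).mul_const (Real.sqrt t)⁻¹
    have heq : (fun w' => u t w') = fun w' => fG σl σu ((w' - c) / Real.sqrt t) :=
      funext fun w' => hu t w'
    rw [heq]
    exact ((hasDerivAt_fG hl hlu ((w - c) / Real.sqrt t)).comp w hinner).deriv
  have hfun1 : (fun w => deriv (fun w' => u t w') w) =
      fun w => K * gfun σl σu (-((w - c) / Real.sqrt t)) * (Real.sqrt t)⁻¹ :=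
    funext hderiv1
  have hy0 : y ≠ 0 := div_ne_zero (sub_ne_zero.mpr hx) hst.ne'
  rcases hy0.lt_or_gt with hyneg | hypos
  · -- y < 0, i.e. x < c : u_xx ≥ 0, uses σu branch
    have hxc : x < c := by
      by_contra h
      push_neg at h
      have : 0 ≤ y := div_nonneg (by linarith) hst.le
      linarith
    -- second derivative
    have hev : (fun w => K * gfun σl σu (-((w - c) / Real.sqrt t)) * (Real.sqrt t)⁻¹)
        =ᶠ[nhds x] fun w => K * stdNormalPDF ((c - w) / (σu * Real.sqrt t)) * (Real.sqrt t)⁻¹ := by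
      filter_upwards [Iio_mem_nhds hxc] with w hw
      have h1 : (0:ℝ) ≤ -((w - c) / Real.sqrt t) := by
        rw [neg_nonneg]
        apply div_nonpos_of_nonpos_of_nonneg (by linarith [Set.mem_Iio.mp hw]) hst.le
      unfold gfun
      rw [if_pos h1]
      congr 2
      field_simp
      ring
    have hD : HasDerivAt (fun w => K * stdNormalPDF ((c - w) / (σu * Real.sqrt t)) * (Real.sqrt t)⁻¹)
        (K * ((-((c - x) / (σu * Real.sqrt t)) * stdNormalPDF ((c - x) / (σu * Real.sqrt t))) *
          (-1 / (σu * Real.sqrt t))) * (Real.sqrt t)⁻¹) x := by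
      have hinner : HasDerivAt (fun w : ℝ => (c - w) / (σu * Real.sqrt t))
          (-1 / (σu * Real.sqrt t)) x := by
        exact (((hasDerivAt_id x).const_sub c).div_const (σu * Real.sqrt t))
      exact ((((hasDerivAt_stdNormalPDF _).comp x hinner).const_mul K).mul_const _)
    have hxx : deriv (fun y => deriv (fun w => u t w) y) x =
        K * ((-((c - x) / (σu * Real.sqrt t)) * stdNormalPDF ((c - x) / (σu * Real.sqrt t))) *
          (-1 / (σu * Real.sqrt t))) * (Real.sqrt t)⁻¹ := by
      rw [show (fun y => deriv (fun w => u t w) y) =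
        (fun w => K * gfun σl σu (-((w - c) / Real.sqrt t)) * (Real.sqrt t)⁻¹) from hfun1]
      rw [Filter.EventuallyEq.deriv_eq hev]
      exact hD.deriv
    set A := stdNormalPDF ((c - x) / (σu * Real.sqrt t)) with hA
    have hApos : 0 < A := stdNormalPDF_pos _
    have hxxval : deriv (fun y => deriv (fun w => u t w) y) x =
        K * (c - x) * A / (σu ^ 2 * t * Real.sqrt t) := by
      rw [hxx]
      field_simp
      linear_combination (-1 : ℝ) * hst2
    have hxxpos : 0 ≤ deriv (fun y => deriv (fun w => u t w) y) x := by
      rw [hxxval]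
      have : (0:ℝ) < c - x := by linarith
      positivity
    rw [hut, max_eq_left hxxpos, max_eq_right (by linarith), hxxval]
    have hg : gfun σl σu (-y) = A := by
      unfold gfun
      rw [if_pos (by rw [neg_nonneg, hy]; exact
        div_nonpos_of_nonpos_of_nonneg (by linarith) hst.le)]
      rw [hA]
      congr 1
      rw [hy, ← neg_div, neg_sub, div_div, mul_comm (Real.sqrt t)]
    rw [hg]
    field_simp
    try simp only [h3]
    rw [hst2]
    ring
  · -- 0 < y, i.e. c < x : u_xx ≤ 0, uses σl branch
    have hxc : c < x := by
      by_contra h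
      push_neg at h
      have : y ≤ 0 := div_nonpos_of_nonpos_of_nonneg (by linarith) hst.le
      linarith
    have hev : (fun w => K * gfun σl σu (-((w - c) / Real.sqrt t)) * (Real.sqrt t)⁻¹)
        =ᶠ[nhds x] fun w => K * stdNormalPDF ((c - w) / (σl * Real.sqrt t)) * (Real.sqrt t)⁻¹ := by
      filter_upwards [Ioi_mem_nhds hxc] with w hw
      have h1 : ¬ ((0:ℝ) ≤ -((w - c) / Real.sqrt t)) := by
        rw [neg_nonneg, not_le]
        exact div_pos (by linarith [Set.mem_Ioi.mp hw]) hst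
      unfold gfun
      rw [if_neg h1]
      congr 2
      field_simp
      ring
    have hD : HasDerivAt (fun w => K * stdNormalPDF ((c - w) / (σl * Real.sqrt t)) * (Real.sqrt t)⁻¹)
        (K * ((-((c - x) / (σl * Real.sqrt t)) * stdNormalPDF ((c - x) / (σl * Real.sqrt t))) *
          (-1 / (σl * Real.sqrt t))) * (Real.sqrt t)⁻¹) x := by
      have hinner : HasDerivAt (fun w : ℝ => (c - w) / (σl * Real.sqrt t))
          (-1 / (σl * Real.sqrt t)) x := by
        exact (((hasDerivAt_id x).const_sub c).div_const (σl * Real.sqrt t))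
      exact ((((hasDerivAt_stdNormalPDF _).comp x hinner).const_mul K).mul_const _)
    have hxx : deriv (fun y => deriv (fun w => u t w) y) x =
        K * ((-((c - x) / (σl * Real.sqrt t)) * stdNormalPDF ((c - x) / (σl * Real.sqrt t))) *
          (-1 / (σl * Real.sqrt t))) * (Real.sqrt t)⁻¹ := by
      rw [show (fun y => deriv (fun w => u t w) y) =
        (fun w => K * gfun σl σu (-((w - c) / Real.sqrt t)) * (Real.sqrt t)⁻¹) from hfun1]
      rw [Filter.EventuallyEq.deriv_eq hev]
      exact hD.deriv
    set A := stdNormalPDF ((c - x) / (σl * Real.sqrt t)) with hA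
    have hApos : 0 < A := stdNormalPDF_pos _
    have hxxval : deriv (fun y => deriv (fun w => u t w) y) x =
        K * (c - x) * A / (σl ^ 2 * t * Real.sqrt t) := by
      rw [hxx]
      field_simp
      linear_combination (-1 : ℝ) * hst2
    have hxxneg : deriv (fun y => deriv (fun w => u t w) y) x ≤ 0 := by
      rw [hxxval]
      apply div_nonpos_of_nonpos_of_nonneg _ (by positivity)
      have : c - x ≤ 0 := by linarith
      exact mul_nonpos_of_nonpos_of_nonneg
        (mul_nonpos_of_nonneg_of_nonpos hKpos.le this) hApos.le
    rw [hut, max_eq_right hxxneg, max_eq_left (by linarith), hxxval]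
    have hg : gfun σl σu (-y) = A := by
      unfold gfun
      rw [if_neg (by rw [neg_nonneg, not_le, hy]; exact div_pos (by linarith) hst)]
      rw [hA]
      congr 1
      rw [hy, ← neg_div, neg_sub, div_div, mul_comm (Real.sqrt t)]
    rw [hg]
    field_simp
    try simp only [h3]
    rw [hst2]
    ring
end
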